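/- Lipschitz continuity of the effective Hamiltonian: Let H : ℝ^N × ℝ^N → ℝ be continuous, ℤ^N-periodic in its first variable, and coercive, and let H̄(P) denote the effective Hamiltonian, i.e., the unique critical value of the cell problem H(x, Du + P) = a on T^N. If there exists L > 0 such that |H(x, p) − H(x, q)| ≤ L|p − q| for all x, p, q ∈ ℝ^N, then |H̄(P) − H̄(Q)| ≤ L|P − Q| for all P, Q ∈ ℝ^N. -/

import Mathlib

open Set Filter MeasureTheory

noncomputable section

abbrev Euc (N : ℕ) := EuclideanSpace ℝ (Fin N)

def intVec {N : ℕ} (z : Fin N → ℤ) : Euc N :=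
  (EuclideanSpace.equiv (Fin N) ℝ).symm (fun i => (z i : ℝ))

def IsZPeriodic {N : ℕ} (u : Euc N → ℝ) : Prop :=
  ∀ (x : Euc N) (z : Fin N → ℤ), u (x + intVec z) = u x

def IsZPeriodicH {N : ℕ} (H : Euc N → Euc N → ℝ) : Prop :=
  ∀ (x p : Euc N) (z : Fin N → ℤ), H (x + intVec z) p = H x p

def superDiff {N : ℕ} (u : Euc N → ℝ) (x : Euc N) : Set (Euc N) :=
  { q | ∃ φ : Euc N → ℝ, ContDiff ℝ 1 φ ∧ IsZPeriodic φ ∧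
        (∀ y, u y - φ y ≤ u x - φ x) ∧ q = gradient φ x }

def subDiff {N : ℕ} (u : Euc N → ℝ) (x : Euc N) : Set (Euc N) :=
  { q | ∃ φ : Euc N → ℝ, ContDiff ℝ 1 φ ∧ IsZPeriodic φ ∧
        (∀ y, u x - φ x ≤ u y - φ y) ∧ q = gradient φ x }

def IsCellSubsolution {N : ℕ} (H : Euc N → Euc N → ℝ) (P : Euc N) (a : ℝ) (u : Euc N → ℝ) : Prop :=
  ∀ x, ∀ q ∈ superDiff u x, H x (q + P) ≤ a

def IsCellSupersolution {N : ℕ} (H : Euc N → Euc N → ℝ) (P : Euc N) (a : ℝ) (u : Euc N → ℝ) : Prop :=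
  ∀ x, ∀ q ∈ subDiff u x, a ≤ H x (q + P)

def IsCellSolution {N : ℕ} (H : Euc N → Euc N → ℝ) (P : Euc N) (u : Euc N → ℝ) (a : ℝ) : Prop :=
  (∃ K : NNReal, LipschitzWith K u) ∧ IsZPeriodic u ∧
    IsCellSubsolution H P a u ∧ IsCellSupersolution H P a u

def IsCoerciveH {N : ℕ} (H : Euc N → Euc N → ℝ) : Prop :=
  ∀ C : ℝ, ∃ r : ℝ, ∀ x p : Euc N, r ≤ ‖p‖ → C ≤ H x p

/-!
If `u` solves the cell problem at slope `P` with constant `c`, the Lipschitz bound on `H` makes `u`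
a subsolution at slope `Q` with constant `c + L‖P - Q‖`. So it suffices to show that a subsolution
at level `a` and a supersolution at level `b` of the same cell problem satisfy `b ≤ a`.

This comparison is proved by doubling the variables: maximize `u x - v y - K Φ(x - y)`, where
`Φ(w) = ∑ sin² (π wᵢ)` is a smooth ℤ^N-periodic replacement for `π² ‖w‖²`. Since `Φ(w) ≥ 4‖w‖²` on
the cube `|wᵢ| ≤ 1/2` and `u` is Lipschitz, `4K‖x₀ - y₀‖ ≤ Lip u` at the maximum. Hence the common
test slope `K ∇Φ(x₀ - y₀)` stays bounded while `x₀ - y₀ → 0` as `K → ∞`, and the viscosity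
inequalities at `x₀` and at `y₀` differ only by the modulus of continuity of `H` on a compact set.
-/

open Real

section Trig

lemma sin_pi_mul_add_intCast_sq (t : ℝ) (z : ℤ) : sin (π * (t + z)) ^ 2 = sin (π * t) ^ 2 := by
  rw [← sq_abs, mul_add, mul_comm π (z : ℝ), sin_add_int_mul_pi, abs_mul, abs_neg_one_zpow,
    one_mul, sq_abs]

lemma hasDerivAt_sin_pi_mul_sq (t : ℝ) :
    HasDerivAt (fun s => sin (π * s) ^ 2) (π * sin (2 * π * t)) t := by
  have h : HasDerivAt (fun s => sin (π * s)) (cos (π * t) * π) t := by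
    simpa using ((hasDerivAt_id t).const_mul π).sin
  refine (h.pow 2).congr_deriv ?_
  rw [show 2 * π * t = 2 * (π * t) by ring, sin_two_mul]
  ring

lemma four_mul_sq_le_sin_pi_mul_sq {t : ℝ} (ht : |t| ≤ 1 / 2) : 4 * t ^ 2 ≤ sin (π * t) ^ 2 := by
  have hπt : |π * t| ≤ π / 2 := by
    rw [abs_mul, abs_of_pos pi_pos]; nlinarith [pi_pos]
  have h := mul_abs_le_abs_sin hπt
  rw [abs_mul, abs_of_pos pi_pos, ← mul_assoc, div_mul_cancel₀ _ pi_ne_zero] at h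
  rw [← sq_abs (sin _), ← sq_abs t]
  nlinarith [abs_nonneg t]

lemma abs_pi_mul_sin_two_pi_mul_le (t : ℝ) : |π * sin (2 * π * t)| ≤ 2 * π ^ 2 * |t| := by
  rw [abs_mul, abs_of_pos pi_pos]
  calc π * |sin (2 * π * t)| ≤ π * |2 * π * t| := mul_le_mul_of_nonneg_left abs_sin_le_abs pi_pos.le
    _ = 2 * π ^ 2 * |t| := by rw [abs_mul, abs_of_pos (by positivity : (0:ℝ) < 2 * π)]; ring

end Trig

section Penalty

variable {N : ℕ}

lemma intVec_apply (z : Fin N → ℤ) (i : Fin N) : intVec z i = z i := rfl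

lemma intVec_neg (z : Fin N → ℤ) : intVec (-z) = -intVec z := by
  ext i; simp [intVec_apply]

def torusPenalty (w : Euc N) : ℝ := ∑ i, sin (π * w i) ^ 2

def torusPenaltyGrad (w : Euc N) : Euc N :=
  (EuclideanSpace.equiv (Fin N) ℝ).symm fun i => π * sin (2 * π * w i)

@[simp]
lemma torusPenalty_zero : torusPenalty (0 : Euc N) = 0 := by
  simp [torusPenalty]

lemma torusPenalty_add_intVec (w : Euc N) (z : Fin N → ℤ) :
    torusPenalty (w + intVec z) = torusPenalty w :=
  Finset.sum_congr rfl fun i _ => sin_pi_mul_add_intCast_sq (w i) (z i)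

lemma torusPenalty_sub_intVec (w : Euc N) (z : Fin N → ℤ) :
    torusPenalty (w - intVec z) = torusPenalty w := by
  rw [sub_eq_add_neg, ← intVec_neg, torusPenalty_add_intVec]

lemma contDiff_torusPenalty : ContDiff ℝ 1 (torusPenalty (N := N)) :=
  ContDiff.sum fun i _ =>
    ((contDiff_sin.of_le le_top).comp
      (contDiff_const.mul (EuclideanSpace.proj (𝕜 := ℝ) i).contDiff)).pow 2

lemma hasGradientAt_torusPenalty (w : Euc N) :
    HasGradientAt torusPenalty (torusPenaltyGrad w) w := by
  have hsum : HasFDerivAt torusPenalty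
      (∑ i, (π * sin (2 * π * w i)) • (EuclideanSpace.proj i : Euc N →L[ℝ] ℝ)) w :=
    HasFDerivAt.fun_sum fun i _ =>
      (hasDerivAt_sin_pi_mul_sq (w i)).comp_hasFDerivAt (f := fun y : Euc N => y i) w
        (EuclideanSpace.proj (𝕜 := ℝ) i).hasFDerivAt
  rw [hasGradientAt_iff_hasFDerivAt]
  refine hsum.congr_fderiv (ContinuousLinearMap.ext fun v => ?_)
  simp [torusPenaltyGrad, PiLp.inner_apply, mul_comm]

lemma four_mul_norm_sq_le_torusPenalty {w : Euc N} (hw : ∀ i, |w i| ≤ 1 / 2) :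
    4 * ‖w‖ ^ 2 ≤ torusPenalty w := by
  rw [EuclideanSpace.norm_sq_eq, Finset.mul_sum]
  exact Finset.sum_le_sum fun i _ => by
    simpa using four_mul_sq_le_sin_pi_mul_sq (hw i)

lemma norm_torusPenaltyGrad_le (w : Euc N) : ‖torusPenaltyGrad w‖ ≤ 2 * π ^ 2 * ‖w‖ := by
  have hsq : ‖torusPenaltyGrad w‖ ^ 2 ≤ (2 * π ^ 2 * ‖w‖) ^ 2 := by
    rw [mul_pow, EuclideanSpace.norm_sq_eq, EuclideanSpace.norm_sq_eq, Finset.mul_sum]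
    refine Finset.sum_le_sum fun i _ => ?_
    rw [← mul_pow]
    exact pow_le_pow_left₀ (norm_nonneg _) (abs_pi_mul_sin_two_pi_mul_le (w i)) 2
  exact (pow_le_pow_iff_left₀ (norm_nonneg _) (by positivity) two_ne_zero).1 hsq

end Penalty

lemma IsCompact.exists_forall_ge_of_forall_exists_ge {X β : Type*} [TopologicalSpace X]
    [Nonempty X] [LinearOrder β] [TopologicalSpace β] [OrderClosedTopology β]
    {s : Set X} (hs : IsCompact s) {F : X → β} (hF : ContinuousOn F s)
    (hdom : ∀ x, ∃ y ∈ s, F x ≤ F y) : ∃ x₀ ∈ s, ∀ x, F x ≤ F x₀ := by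
  obtain ⟨y, hy, -⟩ := hdom (Classical.arbitrary X)
  obtain ⟨x₀, hx₀, hmax⟩ := hs.exists_isMaxOn ⟨y, hy⟩ hF
  refine ⟨x₀, hx₀, fun x => ?_⟩
  obtain ⟨y, hy, hxy⟩ := hdom x
  exact hxy.trans (hmax hy)

lemma IsCompact.exists_pos_forall_dist_lt {α β : Type*} [PseudoMetricSpace α]
    [PseudoMetricSpace β] {s : Set α} (hs : IsCompact s) {f : α → β}
    (hf : ∀ x ∈ s, ContinuousAt f x) {ε : ℝ} (hε : 0 < ε) :
    ∃ δ > 0, ∀ x ∈ s, ∀ y, dist x y < δ → dist (f x) (f y) < ε := by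
  obtain ⟨δ, hδ, h⟩ := Metric.mem_uniformity_dist.1 <|
    hs.uniformContinuousAt_of_continuousAt f hf (Metric.dist_mem_uniformity hε)
  exact ⟨δ, hδ, fun x hx y hxy => h hxy hx⟩

section UnitCube

variable {N : ℕ}

def unitCube (N : ℕ) : Set (Euc N) := {x | ∀ i, x i ∈ Icc (0 : ℝ) 1}

lemma isCompact_unitCube : IsCompact (unitCube N) := by
  convert (EuclideanSpace.equiv (Fin N) ℝ).toHomeomorph.isCompact_preimage.2
    (isCompact_univ_pi fun _ => isCompact_Icc (a := (0 : ℝ)) (b := 1))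
  ext x
  simp only [unitCube, Set.mem_preimage, Set.mem_univ_pi]
  rfl

lemma exists_add_intVec_mem_unitCube (x : Euc N) : ∃ z, x + intVec z ∈ unitCube N :=
  ⟨fun i => -⌊x i⌋, fun i => by
    show x i + ((-⌊x i⌋ : ℤ) : ℝ) ∈ Icc 0 1
    rw [Int.cast_neg, ← sub_eq_add_neg]
    exact ⟨Int.fract_nonneg _, (Int.fract_lt_one _).le⟩⟩

lemma exists_abs_sub_add_intVec_le_half (x y : Euc N) :
    ∃ z, ∀ i, |x i - (y + intVec z : Euc N) i| ≤ 1 / 2 :=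
  ⟨fun i => round (x i - y i), fun i => by
    simpa [intVec_apply, sub_sub] using abs_sub_round (x i - y i)⟩

lemma exists_forall_le_of_periodic {F : Euc N × Euc N → ℝ} (hF : Continuous F)
    (hper₁ : ∀ x y z, F (x + intVec z, y) = F (x, y))
    (hper₂ : ∀ x y z, F (x, y + intVec z) = F (x, y)) :
    ∃ x₀ ∈ unitCube N, ∃ y₀ : Euc N, (∀ i, |x₀ i - y₀ i| ≤ 1 / 2) ∧
      ∀ x y, F (x, y) ≤ F (x₀, y₀) := by
  obtain ⟨⟨x₀, y₀⟩, ⟨hx₀, -⟩, hmax⟩ :=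
    (isCompact_unitCube.prod isCompact_unitCube).exists_forall_ge_of_forall_exists_ge
      hF.continuousOn fun ⟨x, y⟩ => by
        obtain ⟨zx, hzx⟩ := exists_add_intVec_mem_unitCube x
        obtain ⟨zy, hzy⟩ := exists_add_intVec_mem_unitCube y
        exact ⟨(x + intVec zx, y + intVec zy), ⟨hzx, hzy⟩, by rw [hper₂, hper₁]⟩
  obtain ⟨z, hz⟩ := exists_abs_sub_add_intVec_le_half x₀ y₀
  exact ⟨x₀, hx₀, y₀ + intVec z, hz, fun x y => by rw [hper₂]; exact hmax (x, y)⟩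

end UnitCube

section Viscosity

variable {N : ℕ} {H : Euc N → Euc N → ℝ} {P : Euc N} {a b : ℝ} {u v : Euc N → ℝ}

lemma IsCellSubsolution.shift_slope {L : ℝ} (hHLip : ∀ x p q, |H x p - H x q| ≤ L * ‖p - q‖)
    (h : IsCellSubsolution H P a u) (Q : Euc N) :
    IsCellSubsolution H Q (a + L * ‖P - Q‖) u := fun x q hq => by
  have hLip := (abs_le.1 (hHLip x (q + Q) (q + P))).2
  rw [add_sub_add_left_eq_sub, norm_sub_rev] at hLip
  linarith [h x q hq]

lemma hasGradientAt_const_mul_torusPenalty_sub_right (K : ℝ) (y₀ x : Euc N) :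
    HasGradientAt (fun x => K * torusPenalty (x - y₀)) (K • torusPenaltyGrad (x - y₀)) x := by
  have h := ((hasGradientAt_torusPenalty (x - y₀)).hasFDerivAt.comp x
    ((hasFDerivAt_id x).sub_const y₀)).const_mul K
  rw [hasGradientAt_iff_hasFDerivAt]
  refine h.congr_fderiv ?_
  simp [_root_.map_smul]

lemma hasGradientAt_neg_const_mul_torusPenalty_sub_left (K : ℝ) (x₀ y : Euc N) :
    HasGradientAt (fun y => -(K * torusPenalty (x₀ - y))) (K • torusPenaltyGrad (x₀ - y)) y := by
  have h := (((hasGradientAt_torusPenalty (x₀ - y)).hasFDerivAt.comp y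
    ((hasFDerivAt_id y).const_sub x₀)).const_mul K).neg
  rw [hasGradientAt_iff_hasFDerivAt]
  refine h.congr_fderiv (ContinuousLinearMap.ext fun w => ?_)
  simp [_root_.map_smul]

def IsDoublingMax (u v : Euc N → ℝ) (K : ℝ) (x₀ y₀ : Euc N) : Prop :=
  ∀ x y, u x - v y - K * torusPenalty (x - y) ≤ u x₀ - v y₀ - K * torusPenalty (x₀ - y₀)

lemma exists_isDoublingMax (hu : Continuous u) (hup : IsZPeriodic u) (hv : Continuous v)
    (hvp : IsZPeriodic v) (K : ℝ) :
    ∃ x₀ ∈ unitCube N, ∃ y₀ : Euc N, (∀ i, |x₀ i - y₀ i| ≤ 1 / 2) ∧ IsDoublingMax u v K x₀ y₀ :=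
  have hpen : Continuous (torusPenalty (N := N)) := contDiff_torusPenalty.continuous
  exists_forall_le_of_periodic (F := fun q => u q.1 - v q.2 - K * torusPenalty (q.1 - q.2))
    (by fun_prop)
    (fun x y z => by rw [hup, add_sub_right_comm x, torusPenalty_add_intVec])
    (fun x y z => by rw [hvp, sub_add_eq_sub_sub, torusPenalty_sub_intVec])

lemma IsDoublingMax.hamiltonian_bounds {K : ℝ} {x₀ y₀ : Euc N}
    (hsub : IsCellSubsolution H P a u) (hsup : IsCellSupersolution H P b v)
    (hmax : IsDoublingMax u v K x₀ y₀) :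
    H x₀ (K • torusPenaltyGrad (x₀ - y₀) + P) ≤ a ∧
      b ≤ H y₀ (K • torusPenaltyGrad (x₀ - y₀) + P) :=
  ⟨hsub x₀ _ ⟨fun x => K * torusPenalty (x - y₀),
      contDiff_const.mul (contDiff_torusPenalty.comp (contDiff_id.sub contDiff_const)),
      fun x z => by simp only [add_sub_right_comm, torusPenalty_add_intVec],
      fun x => by linarith [hmax x y₀],
      (hasGradientAt_const_mul_torusPenalty_sub_right K y₀ x₀).gradient.symm⟩,
    hsup y₀ _ ⟨fun y => -(K * torusPenalty (x₀ - y)),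
      (contDiff_const.mul (contDiff_torusPenalty.comp (contDiff_const.sub contDiff_id))).neg,
      fun y z => by simp only [sub_add_eq_sub_sub, torusPenalty_sub_intVec],
      fun y => by linarith [hmax x₀ y],
      (hasGradientAt_neg_const_mul_torusPenalty_sub_left K x₀ y₀).gradient.symm⟩⟩

lemma IsDoublingMax.four_mul_norm_sub_le {K : ℝ} {Ku : NNReal} {x₀ y₀ : Euc N} (hK : 0 ≤ K)
    (hu : LipschitzWith Ku u) (hxy : ∀ i, |x₀ i - y₀ i| ≤ 1 / 2)
    (hmax : IsDoublingMax u v K x₀ y₀) : 4 * K * ‖x₀ - y₀‖ ≤ Ku := by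
  have hpen : K * torusPenalty (x₀ - y₀) ≤ Ku * ‖x₀ - y₀‖ := by
    have hdiag := hmax y₀ y₀
    have hLip := hu.dist_le_mul x₀ y₀
    rw [sub_self, torusPenalty_zero] at hdiag
    rw [Real.dist_eq, dist_eq_norm] at hLip
    linarith [le_abs_self (u x₀ - u y₀)]
  have hlow := mul_le_mul_of_nonneg_left (four_mul_norm_sq_le_torusPenalty (w := x₀ - y₀) hxy) hK
  rcases (norm_nonneg (x₀ - y₀)).eq_or_lt with h0 | hpos
  · rw [← h0, mul_zero]; exact Ku.2
  · exact le_of_mul_le_mul_right (by nlinarith) hpos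

theorem le_of_isCellSubsolution_of_isCellSupersolution
    (hHc : Continuous fun q : Euc N × Euc N => H q.1 q.2) {Ku : NNReal}
    (hu : LipschitzWith Ku u) (hup : IsZPeriodic u) (hv : Continuous v) (hvp : IsZPeriodic v)
    (hsub : IsCellSubsolution H P a u) (hsup : IsCellSupersolution H P b v) : b ≤ a := by
  refine le_of_forall_pos_le_add fun ε hε => ?_
  set R := π ^ 2 * Ku / 2 + ‖P‖ with hR
  obtain ⟨δ, hδ, hHδ⟩ := (isCompact_unitCube.prod (isCompact_closedBall (0 : Euc N) R))
    |>.exists_pos_forall_dist_lt (fun _ _ => hHc.continuousAt) hε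
  obtain ⟨K, hK, hKδ⟩ := exists_pos_lt_mul (by positivity : 0 < 4 * δ) (Ku : ℝ)
  obtain ⟨x₀, hx₀, y₀, hxy, hmax⟩ := exists_isDoublingMax hu.continuous hup hv hvp K
  set p := K • torusPenaltyGrad (x₀ - y₀)
  obtain ⟨hHx, hHy⟩ := hmax.hamiltonian_bounds hsub hsup
  have hw := hmax.four_mul_norm_sub_le hK.le hu hxy
  have hp : ‖p + P‖ ≤ R :=
    calc ‖p + P‖ ≤ K * (2 * π ^ 2 * ‖x₀ - y₀‖) + ‖P‖ := by
          grw [norm_add_le, norm_smul, Real.norm_of_nonneg hK.le, norm_torusPenaltyGrad_le]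
      _ ≤ R := by
          rw [hR]
          linarith [mul_le_mul_of_nonneg_left hw (by positivity : (0 : ℝ) ≤ π ^ 2 / 2)]
  have hclose : dist (x₀, p + P) (y₀, p + P) < δ := by
    rw [Prod.dist_eq, dist_self, max_eq_left dist_nonneg, dist_eq_norm]
    nlinarith
  have hH := hHδ (x₀, p + P) ⟨hx₀, mem_closedBall_zero_iff.2 hp⟩ (y₀, p + P) hclose
  linarith [(abs_lt.1 (Real.dist_eq _ _ ▸ hH)).1]

end Viscosity

theorem effective_hamiltonian_lipschitz_general {N : ℕ}
    (H : Euc N → Euc N → ℝ)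
    (hHc : Continuous fun q : Euc N × Euc N => H q.1 q.2)
    (L : ℝ)
    (hHLip : ∀ (x p q : Euc N), |H x p - H x q| ≤ L * ‖p - q‖) :
    ∀ (P Q : Euc N) (u v : Euc N → ℝ) (c d : ℝ),
      IsCellSolution H P u c → IsCellSolution H Q v d →
      |c - d| ≤ L * ‖P - Q‖ := by
  rintro P Q u v c d ⟨⟨Ku, hKu⟩, hup, husub, husup⟩ ⟨⟨Kv, hKv⟩, hvp, hvsub, hvsup⟩
  have hdc := le_of_isCellSubsolution_of_isCellSupersolution hHc hKu hup hKv.continuous hvp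
    (husub.shift_slope hHLip Q) hvsup
  have hcd := le_of_isCellSubsolution_of_isCellSupersolution hHc hKv hvp hKu.continuous hup
    (hvsub.shift_slope hHLip P) husup
  rw [norm_sub_rev] at hcd
  exact abs_sub_le_iff.2 ⟨by linarith, by linarith⟩

/-- Lipschitz continuity of the effective Hamiltonian. -/
theorem effective_hamiltonian_lipschitz {N : ℕ} (hN : 1 ≤ N)
    (H : Euc N → Euc N → ℝ)
    (hHc : Continuous fun q : Euc N × Euc N => H q.1 q.2)
    (hHp : IsZPeriodicH H)
    (hHcoer : IsCoerciveH H)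
    (L : ℝ) (hL : 0 < L)
    (hHLip : ∀ (x p q : Euc N), |H x p - H x q| ≤ L * ‖p - q‖) :
    ∀ (P Q : Euc N) (u v : Euc N → ℝ) (c d : ℝ),
      IsCellSolution H P u c → IsCellSolution H Q v d →
      |c - d| ≤ L * ‖P - Q‖ :=
  effective_hamiltonian_lipschitz_general H hHc L hHLip
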